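/- arXiv:1510.08642 — 4 statements merged into one kernel-verified Lean document; each statement's English description precedes it below -/
import Mathlib

section
/- Let A11, A12, A21, A22, B11, B12, B21, B22 be n×n matrices over a ring. Define S1 = A21 + A22, S2 = S1 − A11, S3 = A11 − A21, S4 = A12 − S2, T1 = B12 − B11, T2 = B22 − T1, T3 = B22 − B12, T4 = T2 − B21, and products M1 = A11·B11, M2 = A12·B21, M3 = S4·B22, M4 = A22·T4, M5 = S1·T1, M6 = S2·T2, M7 = S3·T3. Set U1 = M1 + M2, U2 = M1 + M6, U3 = U2 + M7, U4 = U2 + M5, U5 = U4 + M3, U6 = U3 − M4, U7 = U3 + M5. Then the product of the block matrices [[A11,A12],[A21,A22]] and [[B11,B12],[B21,B22]] equals [[U1, U5],[U6, U7]]. -/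
open Matrix

theorem winograd_one_level {R : Type*} [CommRing R] {n : ℕ}
    (A11 A12 A21 A22 B11 B12 B21 B22 : Matrix (Fin n) (Fin n) R) :
    let S1 := A21 + A22
    let S2 := S1 - A11
    let S3 := A11 - A21
    let S4 := A12 - S2
    let T1 := B12 - B11
    let T2 := B22 - T1
    let T3 := B22 - B12
    let T4 := T2 - B21
    let M1 := A11 * B11
    let M2 := A12 * B21
    let M3 := S4 * B22
    let M4 := A22 * T4
    let M5 := S1 * T1
    let M6 := S2 * T2
    let M7 := S3 * T3
    let U1 := M1 + M2
    let U2 := M1 + M6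
    let U3 := U2 + M7
    let U4 := U2 + M5
    let U5 := U4 + M3
    let U6 := U3 - M4
    let U7 := U3 + M5
    Matrix.fromBlocks A11 A12 A21 A22 * Matrix.fromBlocks B11 B12 B21 B22 =
      Matrix.fromBlocks U1 U5 U6 U7 := by
  simp only [Matrix.fromBlocks_multiply]
  congr 1 <;> noncomm_ring
end

section
/- Let A be the n×n Lotkin matrix over ℚ, defined by a_{1j} = 1 for all j, and a_{ij} = 1/(i+j−1) for i ≥ 2. Then A is invertible for every n ≥ 1. -/
open Matrix Polynomial

/-- The `n × n` Lotkin matrix (1-based: first row all ones, `a_{ij} = 1/(i+j-1)` for `i ≥ 2`),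
written with 0-based indices. -/
def lotkin (n : ℕ) : Matrix (Fin n) (Fin n) ℚ :=
  Matrix.of fun i j => if (i : ℕ) = 0 then 1 else 1 / ((i : ℕ) + (j : ℕ) + 1 : ℚ)

theorem lotkin_invertible (n : ℕ) (hn : 1 ≤ n) : IsUnit (lotkin n) := by
  obtain ⟨m, rfl⟩ : ∃ m, n = m + 1 := ⟨n - 1, by omega⟩
  rw [Matrix.isUnit_iff_isUnit_det, isUnit_iff_ne_zero]
  intro hdet
  obtain ⟨v, hv, hvA⟩ := Matrix.exists_vecMul_eq_zero_iff.mpr hdet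
  have hrel : ∀ j : Fin (m+1),
      v 0 + ∑ i : Fin m, v i.succ * (1 / (((j:ℕ):ℚ) + (((i:ℕ):ℚ) + 2))) = 0 := by
    intro j
    have h := congrFun hvA j
    simp only [Matrix.vecMul, dotProduct, lotkin, Matrix.of_apply, Pi.zero_apply,
      Fin.sum_univ_succ, Fin.val_zero, if_pos, Fin.val_succ, Nat.succ_ne_zero, if_neg,
      Nat.add_eq_zero, and_false, ite_false, mul_one, ite_true] at h
    rw [← h]
    congr 1
    refine Finset.sum_congr rfl fun i _ => ?_
    congr 1
    push_cast
    congr 1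
    ring
  set P : Polynomial ℚ :=
    C (v 0) * ∏ i : Fin m, (X + C (((i:ℕ):ℚ) + 2)) +
      ∑ i : Fin m, C (v i.succ) * ∏ k ∈ Finset.univ.erase i, (X + C (((k:ℕ):ℚ) + 2)) with hP
  have hjne : ∀ (j : Fin (m+1)) (i : Fin m), ((j:ℕ):ℚ) + (((i:ℕ):ℚ) + 2) ≠ 0 := by
    intro j i
    positivity
  have key : ∀ j : Fin (m+1), P.eval ((j:ℕ):ℚ) = 0 := by
    intro j
    have hrw : ∀ i : Fin m,
        ∏ k ∈ Finset.univ.erase i, (((j:ℕ):ℚ) + (((k:ℕ):ℚ) + 2))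
          = (∏ k : Fin m, (((j:ℕ):ℚ) + (((k:ℕ):ℚ) + 2))) * (1 / (((j:ℕ):ℚ) + (((i:ℕ):ℚ) + 2))) := by
      intro i
      rw [mul_one_div, eq_div_iff (hjne j i),
        Finset.prod_erase_mul Finset.univ _ (Finset.mem_univ i)]
    simp only [hP, eval_add, eval_mul, eval_C, eval_finset_sum, eval_prod, eval_X]
    rw [Finset.sum_congr rfl fun i _ => by rw [hrw i]]
    set Q : ℚ := ∏ k : Fin m, (((j:ℕ):ℚ) + (((k:ℕ):ℚ) + 2)) with hQ
    have expand : v 0 * Q + ∑ i : Fin m, v i.succ * (Q * (1 / (((j:ℕ):ℚ) + (((i:ℕ):ℚ) + 2))))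
        = Q * (v 0 + ∑ i : Fin m, v i.succ * (1 / (((j:ℕ):ℚ) + (((i:ℕ):ℚ) + 2)))) := by
      rw [mul_add, Finset.mul_sum, mul_comm (v 0) Q]
      congr 1
      exact Finset.sum_congr rfl fun i _ => by ring
    rw [expand, hrel j, mul_zero]
  have hdegP : P.natDegree < m + 1 := by
    have hprod : ∀ (s : Finset (Fin m)),
        (∏ i ∈ s, (X + C (((i:ℕ):ℚ) + 2))).natDegree ≤ s.card := by
      intro s
      refine le_trans (Polynomial.natDegree_prod_le _ _) ?_
      rw [Finset.sum_congr rfl fun i _ => Polynomial.natDegree_X_add_C _,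
        Finset.sum_const, smul_eq_mul, mul_one]
    have h1 : (C (v 0) * ∏ i : Fin m, (X + C (((i:ℕ):ℚ) + 2))).natDegree ≤ m := by
      refine le_trans (natDegree_C_mul_le _ _) ?_
      simpa using hprod Finset.univ
    have h2 : (∑ i : Fin m, C (v i.succ) * ∏ k ∈ Finset.univ.erase i,
        (X + C (((k:ℕ):ℚ) + 2))).natDegree ≤ m := by
      refine Polynomial.natDegree_sum_le_of_forall_le Finset.univ _ fun i _ => ?_
      refine le_trans (natDegree_C_mul_le _ _) (le_trans (hprod _) ?_)
      simp [Finset.card_erase_of_mem]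
    have h3 := Polynomial.natDegree_add_le (C (v 0) * ∏ i : Fin m, (X + C (((i:ℕ):ℚ) + 2)))
      (∑ i : Fin m, C (v i.succ) * ∏ k ∈ Finset.univ.erase i, (X + C (((k:ℕ):ℚ) + 2)))
    rw [← hP] at h3
    omega
  have hinj : Function.Injective (fun j : Fin (m+1) => ((j:ℕ):ℚ)) := by
    intro a b h
    simp only at h
    exact Fin.ext (by exact_mod_cast h)
  have hP0 : P = 0 :=
    Polynomial.eq_zero_of_natDegree_lt_card_of_eval_eq_zero P hinj key
      (by simpa using hdegP)
  have hvs : ∀ i : Fin m, v i.succ = 0 := by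
    intro i
    have h0 := congrArg (Polynomial.eval (-(((i:ℕ):ℚ) + 2))) hP0
    simp only [hP, eval_add, eval_mul, eval_C, eval_finset_sum, eval_prod, eval_X,
      eval_zero] at h0
    rw [Finset.prod_eq_zero (Finset.mem_univ i) (by ring), mul_zero, zero_add,
      ← Finset.add_sum_erase _ _ (Finset.mem_univ i)] at h0
    have hz : ∀ l ∈ Finset.univ.erase i, v l.succ *
        ∏ k ∈ Finset.univ.erase l, (-(((i:ℕ):ℚ) + 2) + (((k:ℕ):ℚ) + 2)) = 0 := by
      intro l hl
      have hi : i ∈ Finset.univ.erase l :=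
        Finset.mem_erase.2 ⟨(Finset.mem_erase.1 hl).1.symm, Finset.mem_univ i⟩
      rw [Finset.prod_eq_zero hi (by ring), mul_zero]
    rw [Finset.sum_eq_zero hz, add_zero] at h0
    have hne : ∏ k ∈ Finset.univ.erase i, (-(((i:ℕ):ℚ) + 2) + (((k:ℕ):ℚ) + 2)) ≠ 0 := by
      refine Finset.prod_ne_zero_iff.2 fun k hk => ?_
      have hki : (k:ℕ) ≠ (i:ℕ) := fun h => (Finset.mem_erase.1 hk).1 (Fin.ext h)
      have : ((k:ℕ):ℚ) ≠ ((i:ℕ):ℚ) := by exact_mod_cast hki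
      intro h
      apply this
      linarith
    exact (mul_eq_zero.1 h0).resolve_right hne
  have hv0 : v 0 = 0 := by
    have h := hrel 0
    rw [Finset.sum_eq_zero (fun i _ => by rw [hvs i, zero_mul]), add_zero] at h
    exact h
  apply hv
  funext x
  refine Fin.cases hv0 (fun i => hvs i) x
end

section
/- If the one-level Strassen identity holds over every commutative ring for 2×2 matrices of scalars, then by induction the full recursive Strassen algorithm computes the correct product of 2^k × 2^k matrices over any commutative ring: the function strassenMul defined by recursion on k (base case scalar multiplication, recursive case the 7-product combination) satisfies strassenMul k A B = A * B. -/
open Matrix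

/-- Reindexing equivalence splitting `Fin (2^(k+1))` into two halves. -/
def splitEquiv (k : ℕ) : Fin (2 ^ (k + 1)) ≃ (Fin (2 ^ k) ⊕ Fin (2 ^ k)) :=
  (finCongr (by rw [pow_succ]; ring)).trans finSumFinEquiv.symm

/-- Recursive Strassen multiplication on `2^k × 2^k` matrices. -/
def strassenMul (R : Type*) [CommRing R] :
    (k : ℕ) → Matrix (Fin (2 ^ k)) (Fin (2 ^ k)) R →
      Matrix (Fin (2 ^ k)) (Fin (2 ^ k)) R → Matrix (Fin (2 ^ k)) (Fin (2 ^ k)) R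
  | 0, A, B => Matrix.of fun i j => A i j * B i j
  | (k + 1), A, B =>
    let e := splitEquiv k
    let A' := Matrix.reindex e e A
    let B' := Matrix.reindex e e B
    let A11 := A'.toBlocks₁₁; let A12 := A'.toBlocks₁₂
    let A21 := A'.toBlocks₂₁; let A22 := A'.toBlocks₂₂
    let B11 := B'.toBlocks₁₁; let B12 := B'.toBlocks₁₂
    let B21 := B'.toBlocks₂₁; let B22 := B'.toBlocks₂₂
    let P1 := strassenMul R k (A11 + A22) (B11 + B22)
    let P2 := strassenMul R k (A21 + A22) B11
    let P3 := strassenMul R k A11 (B12 - B22)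
    let P4 := strassenMul R k A22 (B21 - B11)
    let P5 := strassenMul R k (A11 + A12) B22
    let P6 := strassenMul R k (A21 - A11) (B11 + B12)
    let P7 := strassenMul R k (A12 - A22) (B21 + B22)
    Matrix.reindex e.symm e.symm
      (Matrix.fromBlocks (P1 + P4 - P5 + P7) (P3 + P5) (P2 + P4) (P1 - P2 + P3 + P6))

theorem strassenMul_correct (R : Type*) [CommRing R] :
    ∀ (k : ℕ) (A B : Matrix (Fin (2 ^ k)) (Fin (2 ^ k)) R),
      strassenMul R k A B = A * B := by
  intro k
  induction k with
  | zero =>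
    intro A B
    ext i j
    obtain rfl : j = i := Fin.ext (by omega)
    rw [Matrix.mul_apply, Finset.sum_eq_single j
      (fun x _ hx => absurd (Fin.ext (by omega)) hx) (fun h => absurd (Finset.mem_univ j) h)]
    rfl
  | succ k ih =>
    intro A B
    show Matrix.reindex (splitEquiv k).symm (splitEquiv k).symm _ = A * B
    set e := splitEquiv k
    set A' := Matrix.reindex e e A with hA'
    set B' := Matrix.reindex e e B with hB'
    have hAB : A * B = Matrix.reindex e.symm e.symm (A' * B') := by
      simp [hA', hB', Matrix.reindex_apply, Matrix.submatrix_mul_equiv]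
    rw [hAB]
    congr 1
    rw [← Matrix.fromBlocks_toBlocks A', ← Matrix.fromBlocks_toBlocks B',
      Matrix.fromBlocks_multiply]
    simp only [ih]
    rw [Matrix.fromBlocks_inj]
    simp only [Matrix.toBlocks_fromBlocks₁₁, Matrix.toBlocks_fromBlocks₁₂,
      Matrix.toBlocks_fromBlocks₂₁, Matrix.toBlocks_fromBlocks₂₂]
    refine ⟨?_, ?_, ?_, ?_⟩ <;> noncomm_ring
end

section
/- If x and y are double precision floating-point numbers (elements of a finite-precision format with unit roundoff u) and s = fl(x+y), then the Fast2Sum error term e defined by e = y − (s − x) (computed exactly when |x| ≥ |y|) satisfies x + y = s + e exactly. -/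
/-- A real number is representable in a radix-2 floating-point format with a `p`-bit
significand (and unbounded exponent range). -/
def FpRep (p : ℕ) (x : ℝ) : Prop :=
  ∃ m e : ℤ, |m| < 2 ^ p ∧ x = (m : ℝ) * 2 ^ e

lemma fpRep_norm_aux (p : ℕ) (hp : 1 ≤ p) :
    ∀ (n : ℕ) (m : ℤ), m ≠ 0 → |m| < 2 ^ p → 2 ^ p - |m| ≤ (n : ℤ) →
    ∃ (m' : ℤ) (k : ℕ), 2 ^ (p - 1) ≤ |m'| ∧ |m'| < 2 ^ p ∧ m' = m * 2 ^ k := by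
  intro n
  induction n with
  | zero =>
    intro m hm0 hm hle
    exfalso
    simp only [Nat.cast_zero] at hle
    linarith
  | succ n ih =>
    intro m hm0 hm hle
    by_cases hbig : 2 ^ (p - 1) ≤ |m|
    · exact ⟨m, 0, hbig, hm, by ring⟩
    · push_neg at hbig
      have h1 : (1 : ℤ) ≤ |m| := Int.one_le_abs (by omega)
      have hpe : (2 : ℤ) ^ p = 2 * 2 ^ (p - 1) := by
        conv_lhs => rw [show p = (p - 1) + 1 from (Nat.succ_pred_eq_of_pos hp).symm]
        rw [pow_succ]; ring
      have habs2 : |2 * m| = 2 * |m| := by rw [abs_mul]; norm_num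
      obtain ⟨m', k, h'1, h'2, h'3⟩ := ih (2 * m) (by simp [hm0])
        (by rw [habs2]; linarith)
        (by push_cast at hle ⊢; linarith)
      exact ⟨m', k + 1, h'1, h'2, by rw [h'3]; ring⟩

lemma fpRep_norm {p : ℕ} (hp : 1 ≤ p) {z : ℝ} (h : FpRep p z) (hz : z ≠ 0) :
    ∃ m e : ℤ, 2 ^ (p - 1) ≤ |m| ∧ |m| < 2 ^ p ∧ z = (m : ℝ) * 2 ^ e := by
  obtain ⟨m, e, hm, hze⟩ := h
  have hm0 : m ≠ 0 := by
    rintro rfl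
    simp at hze
    exact hz hze
  obtain ⟨m', k, h1, h2, h3⟩ := fpRep_norm_aux p hp ((2 ^ p - |m|).toNat) m hm0 hm
    (Int.self_le_toNat _)
  refine ⟨m', e - k, h1, h2, ?_⟩
  have hc : (m' : ℝ) = (m : ℝ) * 2 ^ k := by exact_mod_cast congrArg (Int.cast : ℤ → ℝ) h3
  rw [hze, hc, show ((2:ℝ)) ^ k = (2:ℝ) ^ (k : ℤ) from (zpow_natCast 2 k).symm]
  have h2e : (2:ℝ) ^ (k : ℤ) * 2 ^ (e - k) = 2 ^ e := by
    rw [← zpow_add₀ (two_ne_zero : (2:ℝ) ≠ 0)]; congr 1; ring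
  rw [mul_assoc, h2e]

set_option maxHeartbeats 1000000 in
/-- Fast2Sum (Dekker): if `|y| ≤ |x|` and `s` is a round-to-nearest of `x + y`, then the
rounding error `x + y - s` is exactly representable and, computing exactly, equals
`y - (s - x)`; in particular `x + y = s + e` exactly. -/
theorem fast2Sum_correct (p : ℕ) (hp : 1 ≤ p) (x y s : ℝ)
    (hx : FpRep p x) (hy : FpRep p y) (hxy : |y| ≤ |x|)
    (hs_rep : FpRep p s)
    (hs_nearest : ∀ t : ℝ, FpRep p t → |x + y - s| ≤ |x + y - t|) :
    FpRep p (y - (s - x)) ∧ x + y = s + (y - (s - x)) := by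
  obtain ⟨q, rfl⟩ : ∃ q, p = q + 1 := ⟨p - 1, by omega⟩
  suffices h : FpRep (q + 1) (x + y - s) by
    refine ⟨?_, by ring⟩
    have he : y - (s - x) = x + y - s := by ring
    rwa [he]
  have h2pos : ∀ a : ℤ, (0:ℝ) < 2 ^ a := fun a => zpow_pos (by norm_num) a
  have hrep0 : FpRep (q + 1) 0 :=
    ⟨0, 0, by simpa using pow_pos (by norm_num : (0:ℤ) < 2) (q + 1), by norm_num⟩
  have hxyrep_imp : FpRep (q + 1) (x + y) → s = x + y := by
    intro h
    have h2 := hs_nearest (x + y) h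
    rw [sub_self, abs_zero] at h2
    have h3 : |x + y - s| = 0 := le_antisymm h2 (abs_nonneg _)
    have h4 := abs_eq_zero.mp h3
    linarith
  by_cases hy0 : y = 0
  · have hsx : s = x + y := hxyrep_imp (by rw [hy0, add_zero]; exact hx)
    rw [hsx]
    simpa using hrep0
  have hx0 : x ≠ 0 := by
    intro h
    rw [h, abs_zero] at hxy
    exact hy0 (abs_eq_zero.mp (le_antisymm hxy (abs_nonneg y)))
  obtain ⟨my, ey, hmy1, hmy2, hyeq⟩ := fpRep_norm (by omega) hy hy0
  obtain ⟨mx, ex, hmx1, hmx2, hxeq⟩ := fpRep_norm (by omega) hx hx0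
  simp only [Nat.add_sub_cancel] at hmy1 hmx1
  have haby : |y| = (|my| : ℝ) * 2 ^ ey := by
    rw [hyeq, abs_mul, abs_of_pos (h2pos ey)]
  have habx : |x| = (|mx| : ℝ) * 2 ^ ex := by
    rw [hxeq, abs_mul, abs_of_pos (h2pos ex)]
  -- basic cast facts
  have hq1 : ((2:ℝ)) ^ q * 2 = (2:ℝ) ^ (q + 1) := by rw [pow_succ]
  have hmyR1 : (2:ℝ) ^ q ≤ (|my| : ℝ) := by exact_mod_cast hmy1
  have hmyR2 : (|my| : ℝ) < (2:ℝ) ^ (q + 1) := by exact_mod_cast hmy2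
  have hmxR2 : (|mx| : ℝ) < (2:ℝ) ^ (q + 1) := by exact_mod_cast hmx2
  have heyx : ey ≤ ex := by
    by_contra hlt
    push_neg at hlt
    have h1 : (2:ℝ) ^ (ex + 1) ≤ (2:ℝ) ^ ey :=
      (zpow_le_zpow_iff_right₀ one_lt_two).mpr (by omega)
    have hex1 : (2:ℝ) ^ (ex + 1) = 2 ^ ex * 2 := zpow_add_one₀ two_ne_zero ex
    have hchain : |x| < |y| := by
      calc |x| = (|mx| : ℝ) * 2 ^ ex := habx
        _ < (2:ℝ) ^ (q + 1) * 2 ^ ex := by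
            have := h2pos ex; nlinarith
        _ = (2:ℝ) ^ q * 2 ^ (ex + 1) := by rw [hex1, ← hq1]; ring
        _ ≤ (2:ℝ) ^ q * 2 ^ ey := by
            have : (0:ℝ) < (2:ℝ) ^ q := by positivity
            nlinarith
        _ ≤ (|my| : ℝ) * 2 ^ ey := by
            have := h2pos ey; nlinarith
        _ = |y| := haby.symm
    linarith
  set d : ℕ := (ex - ey).toNat with hdd
  have hd : (d : ℤ) = ex - ey := Int.toNat_of_nonneg (by omega)
  have hM : x + y = ((mx * 2 ^ d + my : ℤ) : ℝ) * 2 ^ ey := by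
    rw [hxeq, hyeq]
    have hsplit : (2:ℝ) ^ ex = (2:ℝ) ^ (d : ℤ) * 2 ^ ey := by
      rw [← zpow_add₀ (two_ne_zero : (2:ℝ) ≠ 0)]; congr 1; omega
    rw [hsplit]
    push_cast
    rw [zpow_natCast]
    ring
  set M : ℤ := mx * 2 ^ d + my with hMdef
  have herr : |x + y - s| ≤ |y| := by
    have h := hs_nearest x hx
    rwa [show x + y - x = y by ring] at h
  -- key claim: s is an integer multiple of 2 ^ ey
  have hsN : ∃ N : ℤ, s = (N : ℝ) * 2 ^ ey := by
    by_cases hMp : |M| < 2 ^ (q + 1)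
    · exact ⟨M, by rw [hxyrep_imp ⟨M, ey, hMp, hM⟩, hM]⟩
    push_neg at hMp
    have hMpR : (2:ℝ) ^ (q + 1) ≤ (|M| : ℝ) := by exact_mod_cast hMp
    have habxy : |x + y| = (|M| : ℝ) * 2 ^ ey := by
      rw [hM, abs_mul, abs_of_pos (h2pos ey)]
    have hxylb : (2:ℝ) ^ (q + 1) * 2 ^ ey ≤ |x + y| := by
      rw [habxy]
      have := h2pos ey
      nlinarith
    have hylt : |y| < (2:ℝ) ^ (q + 1) * 2 ^ ey := by
      rw [haby]
      have := h2pos ey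
      nlinarith
    have hs0 : s ≠ 0 := by
      rintro rfl
      rw [sub_zero] at herr
      linarith
    obtain ⟨ms, es, hms1, hms2, hseq⟩ := fpRep_norm (by omega) hs_rep hs0
    simp only [Nat.add_sub_cancel] at hms1
    by_cases hes : ey ≤ es
    · refine ⟨ms * 2 ^ ((es - ey).toNat), ?_⟩
      rw [hseq]
      have hsplit : (2:ℝ) ^ es = (2:ℝ) ^ (((es - ey).toNat : ℕ) : ℤ) * 2 ^ ey := by
        rw [← zpow_add₀ (two_ne_zero : (2:ℝ) ≠ 0)]; congr 1
        rw [Int.toNat_of_nonneg (by omega)]; ring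
      rw [hsplit]
      push_cast
      rw [zpow_natCast]
      ring
    · exfalso
      push_neg at hes
      have hmsR2 : (|ms| : ℝ) < (2:ℝ) ^ (q + 1) := by exact_mod_cast hms2
      have hsub : |s| < (2:ℝ) ^ q * 2 ^ ey := by
        have h1 : (2:ℝ) ^ es ≤ 2 ^ (ey - 1) :=
          (zpow_le_zpow_iff_right₀ one_lt_two).mpr (by omega)
        have h2 : (2:ℝ) ^ (ey - 1) * 2 = 2 ^ ey := by
          rw [← zpow_add_one₀ (two_ne_zero : (2:ℝ) ≠ 0)]; congr 1; ring
        have h3 : |s| = (|ms| : ℝ) * 2 ^ es := by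
          rw [hseq, abs_mul, abs_of_pos (h2pos es)]
        have h4 : (0:ℝ) < 2 ^ (ey - 1) := h2pos _
        have h5 : (0:ℝ) ≤ (|ms| : ℝ) := by positivity
        calc |s| = (|ms| : ℝ) * 2 ^ es := h3
          _ ≤ (|ms| : ℝ) * 2 ^ (ey - 1) := by nlinarith
          _ < (2:ℝ) ^ (q + 1) * 2 ^ (ey - 1) := by nlinarith
          _ = (2:ℝ) ^ q * 2 ^ ey := by rw [← h2, ← hq1]; ring
      -- bound |M| < 2^(q+2)
      have hMub : (|M| : ℝ) < (2:ℝ) ^ (q + 2) := by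
        have h1 : |x + y| ≤ |s| + |y| := by
          have := abs_sub_abs_le_abs_sub (x + y) s
          have := abs_nonneg (x + y - s)
          linarith [herr, abs_sub_abs_le_abs_sub (x + y) s]
        have hE := h2pos ey
        have h2 : (|M| : ℝ) * 2 ^ ey < ((2:ℝ) ^ q + 2 ^ (q + 1)) * 2 ^ ey := by
          rw [← habxy]
          nlinarith
        have h3 : (|M| : ℝ) < (2:ℝ) ^ q + 2 ^ (q + 1) := by
          nlinarith
        have h4 : ((2:ℝ) ^ q + 2 ^ (q + 1)) < 2 ^ (q + 2) := by
          have : (0:ℝ) < (2:ℝ) ^ q := by positivity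
          rw [pow_succ, pow_succ]
          nlinarith
        linarith
      have hMub' : |M| < 2 ^ (q + 2) := by exact_mod_cast hMub
      obtain ⟨k, hk | hk⟩ := Int.even_or_odd' M
      · -- M even: x + y is representable, so s = x + y, contradicting hsub
        have hkb : |k| < 2 ^ (q + 1) := by
          have h1 : |M| = 2 * |k| := by rw [hk, abs_mul]; norm_num
          have h2 : (2:ℤ) ^ (q + 2) = 2 * 2 ^ (q + 1) := by rw [pow_succ]; ring
          omega
        have hxyrep : FpRep (q + 1) (x + y) := by
          refine ⟨k, ey + 1, hkb, ?_⟩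
          rw [hM, hk]
          push_cast
          rw [zpow_add_one₀ (two_ne_zero : (2:ℝ) ≠ 0)]
          ring
        have hsx := hxyrep_imp hxyrep
        rw [hsx] at hsub
        have : (2:ℝ) ^ q * 2 ^ ey < 2 ^ (q + 1) * 2 ^ ey := by
          have h := h2pos ey
          have : (0:ℝ) < (2:ℝ) ^ q := by positivity
          nlinarith [hq1]
        linarith
      · -- M odd: M = 2k+1
        have hkb : -(2 ^ (q + 1)) ≤ k ∧ k < 2 ^ (q + 1) := by
          have h1 := abs_lt.mp hMub'
          have h2 : (2:ℤ) ^ (q + 2) = 2 * 2 ^ (q + 1) := by rw [pow_succ]; ring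
          omega
        have htrep : FpRep (q + 1) ((k : ℝ) * 2 ^ (ey + 1)) := by
          by_cases hkA : k = -(2 ^ (q + 1))
          · have habs1 : |(-1 : ℤ)| < 2 ^ (q + 1) := by
              rw [abs_neg, abs_one]
              calc (1:ℤ) < 2 := one_lt_two
                _ ≤ 2 ^ (q + 1) := le_self_pow₀ one_le_two (by omega)
            refine ⟨-1, ey + 1 + ((q + 1 : ℕ) : ℤ), habs1, ?_⟩
            rw [hkA, zpow_add₀ (two_ne_zero : (2:ℝ) ≠ 0) (ey + 1) (((q + 1 : ℕ)) : ℤ),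
              zpow_natCast]
            push_cast
            ring
          · refine ⟨k, ey + 1, ?_, rfl⟩
            rw [abs_lt]
            omega
        have htdist : |x + y - (k : ℝ) * 2 ^ (ey + 1)| = 2 ^ ey := by
          rw [hM, hk]
          push_cast
          rw [zpow_add_one₀ (two_ne_zero : (2:ℝ) ≠ 0)]
          rw [show ((2:ℝ) * k + 1) * 2 ^ ey - k * (2 ^ ey * 2) = 2 ^ ey by ring]
          exact abs_of_pos (h2pos ey)
        have herr2 : |x + y - s| ≤ 2 ^ ey := by
          have h := hs_nearest _ htrep
          rwa [htdist] at h
        have hlb : |s| ≥ |x + y| - 2 ^ ey := by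
          have := abs_sub_abs_le_abs_sub (x + y) s
          linarith
        have hE := h2pos ey
        have hQ : (1:ℝ) ≤ (2:ℝ) ^ q := one_le_pow₀ (by norm_num)
        nlinarith [hxylb, hsub, hq1]
  obtain ⟨N, hN⟩ := hsN
  refine ⟨M - N, ey, ?_, ?_⟩
  · have hdiff : x + y - s = ((M - N : ℤ) : ℝ) * 2 ^ ey := by
      rw [hM, hN]; push_cast; ring
    have habd : |x + y - s| = (|M - N| : ℝ) * 2 ^ ey := by
      rw [hdiff, abs_mul, abs_of_pos (h2pos ey)]
      norm_cast
    have hE := h2pos ey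
    have h1 : (|M - N| : ℝ) * 2 ^ ey < (2:ℝ) ^ (q + 1) * 2 ^ ey := by
      rw [← habd]
      calc |x + y - s| ≤ |y| := herr
        _ = (|my| : ℝ) * 2 ^ ey := haby
        _ < (2:ℝ) ^ (q + 1) * 2 ^ ey := by nlinarith
    have h2 : (|M - N| : ℝ) < (2:ℝ) ^ (q + 1) := by nlinarith
    exact_mod_cast h2
  · rw [hM, hN]; push_cast; ring
end
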